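/- arXiv:2008.04994 — 3 statements merged into one kernel-verified Lean document; each statement's English description precedes it below -/
import Mathlib

section
/- There exists a set X ⊆ ω₁^ω such that for every tree T ⊆ ω₁^{<ω} with the property that every node of T extending the stem has exactly ω-many immediate successors in T, the set of branches [T] intersects both X and its complement, provided ω₁ ≤ 2^ω. -/
/-- `T ⊆ κ^{<ω}` is a tree: closed under taking prefixes. -/
def IsSeqTree {κ : Type*} (T : Set (List κ)) : Prop :=
  ∀ s ∈ T, ∀ t : List κ, t <+: s → t ∈ T

/-- `T ∈ 𝕃(ω₁,ω)`: a tree in `κ^{<ω}` (`κ` of size `ω₁`) with a stem (a node comparable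
with all nodes of `T`) such that every node extending the stem has countably infinitely
many immediate successors in `T`. -/
def LaverOmega {κ : Type*} (T : Set (List κ)) : Prop :=
  IsSeqTree T ∧ T.Nonempty ∧
    ∃ st ∈ T, (∀ s ∈ T, st <+: s ∨ s <+: st) ∧
      ∀ t ∈ T, st <+: t →
        {α : κ | t ++ [α] ∈ T}.Countable ∧ {α : κ | t ++ [α] ∈ T}.Infinite

/-- The set of branches of a tree `T ⊆ κ^{<ω}`. -/
def seqBranches {κ : Type*} (T : Set (List κ)) : Set (ℕ → κ) :=
  {x | ∀ n : ℕ, List.ofFn (fun i : Fin n => x i) ∈ T}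


/-!
A tree in `𝕃(ω₁,ω)` is a countable set of finite sequences from a set of size `ℵ₁`, so there
are at most `ℵ₁ ^ ℵ₀ = 𝔠` such trees; and since every node above the stem splits, each tree has
at least `𝔠` branches. Enumerating the trees in order type `𝔠`, a transfinite recursion picks at
each stage two branches of the current tree distinct from all earlier picks; the first picks
form the required set.
-/

open Cardinal Set Function

universe u

section Bernstein

variable {ι β : Type u}

theorem exists_injective_forall_mem_of_mk_Iio_lt [LinearOrder ι] [WellFoundedLT ι]
    (S : ι → Set β) (hS : ∀ i, #(Iio i) < #(S i)) :
    ∃ f : ι → β, Injective f ∧ ∀ i, f i ∈ S i := by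
  have step : ∀ i (g : ∀ j, j < i → β), ∃ b ∈ S i, ∀ j (hj : j < i), b ≠ g j hj := by
    intro i g
    have hB : #(range fun j : Iio i => g j j.2) < #(S i) := mk_range_le.trans_lt (hS i)
    obtain ⟨b, hb, hbB⟩ := sdiff_nonempty.2 fun hsub => (mk_le_mk_of_subset hsub).not_gt hB
    exact ⟨b, hb, fun j hj hbj => hbB ⟨⟨j, hj⟩, hbj.symm⟩⟩
  choose pick hpick_mem hpick_ne using step
  let f : ι → β := wellFounded_lt.fix pick
  have hf : ∀ i, f i = pick i fun j _ => f j := wellFounded_lt.fix_eq pick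
  refine ⟨f, fun i j hij => ?_, fun i => hf i ▸ hpick_mem _ _⟩
  by_contra hne
  rcases lt_or_gt_of_ne hne with h | h
  · exact hpick_ne j _ i h (by rw [← hf, hij])
  · exact hpick_ne i _ j h (by rw [← hf, hij])

theorem exists_inter_nonempty_diff_nonempty (S : ι → Set β) (hι : ∀ i, #ι ≤ #(S i))
    (hS : ∀ i, ℵ₀ ≤ #(S i)) : ∃ X : Set β, ∀ i, (S i ∩ X).Nonempty ∧ (S i \ X).Nonempty := by
  -- distinct points for `(i, true)` and `(i, false)` give a point of `S i` inside and one outside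
  let J := (#(ι × Bool)).ord.ToType
  obtain ⟨e⟩ : Nonempty (ι × Bool ≃ J) := Cardinal.eq.1 (mk_ord_toType _).symm
  have hJ : ∀ j : J, #(Iio j) < #(S (e.symm j).1) := fun j =>
    (show #(Iio j) < #(ι × Bool) by simpa [J] using mk_Iio_lt j).trans_le <| by
      simp only [mk_prod, lift_uzero, mk_bool, lift_ofNat]
      exact (mul_le_max _ _).trans
        (max_le (max_le (hι _) (ofNat_le_aleph0.trans (hS _))) (hS _))
  obtain ⟨f, hf, hfS⟩ := exists_injective_forall_mem_of_mk_Iio_lt _ hJ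
  refine ⟨range fun i => f (e (i, true)), fun i => ⟨⟨_, ?_, i, rfl⟩, ⟨f (e (i, false)), ?_, ?_⟩⟩⟩
  · simpa using hfS (e (i, true))
  · simpa using hfS (e (i, false))
  · rintro ⟨j, hj⟩
    simpa using e.injective (hf hj)

end Bernstein

section Trees

variable {κ : Type u} {T : Set (List κ)}

theorem IsSeqTree.countable_of_countable_succ (hT : IsSeqTree T)
    (hsucc : ∀ t ∈ T, {α | t ++ [α] ∈ T}.Countable) : T.Countable := by
  have hlevel : ∀ n, {t ∈ T | t.length = n}.Countable := by
    intro n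
    induction n with
    | zero => exact (countable_singleton []).mono fun t ht => List.eq_nil_of_length_eq_zero ht.2
    | succ n ih =>
      refine (ih.biUnion fun t ht => (hsucc t ht.1).image (t ++ [·])).mono ?_
      rintro s ⟨hs, hlen⟩
      rcases s.eq_nil_or_concat with rfl | ⟨t, a, rfl⟩
      · simp at hlen
      · rw [List.concat_eq_append] at hs hlen ⊢
        exact mem_biUnion ⟨hT _ hs t (List.prefix_append _ _), by simpa using hlen⟩ ⟨a, hs, rfl⟩
  refine (countable_iUnion hlevel).mono fun t ht => ?_
  exact mem_iUnion_of_mem t.length ⟨ht, rfl⟩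

theorem LaverOmega.countable_succ (hT : LaverOmega T) :
    ∀ t ∈ T, {α | t ++ [α] ∈ T}.Countable := by
  obtain ⟨-, -, st, -, hcomp, hsucc⟩ := hT
  intro t ht
  by_cases hst : st <+: t
  · exact (hsucc t ht hst).1
  refine Subsingleton.countable fun a ha b hb => ?_
  have hpre : ∀ {α}, t ++ [α] ∈ T → t ++ [α] <+: st := fun {α} hα =>
    (hcomp _ hα).elim (fun h => (List.prefix_concat_iff.1 h).elim (· ▸ List.prefix_rfl)
      fun h' => absurd h' hst) id
  simpa using
    (List.prefix_of_prefix_length_le (hpre ha) (hpre hb) (by simp)).eq_of_length (by simp)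

theorem LaverOmega.countable (hT : LaverOmega T) : T.Countable :=
  hT.1.countable_of_countable_succ hT.countable_succ

theorem mk_laverOmega_le [Infinite κ] : #{T : Set (List κ) // LaverOmega T} ≤ #κ ^ ℵ₀ :=
  calc #{T : Set (List κ) // LaverOmega T}
      ≤ #{T : Set (List κ) // #T ≤ ℵ₀} :=
        mk_subtype_mono fun _ hT => le_aleph0_iff_set_countable.2 hT.countable
    _ ≤ #(List κ) ^ ℵ₀ := mk_bounded_set_le_of_infinite _ _
    _ = #κ ^ ℵ₀ := by rw [mk_list_eq_mk]

end Trees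

theorem List.ofFn_eq_take_of_prefix_chain {α : Type*} {u : ℕ → List α} {x : ℕ → α}
    (hu : ∀ {m n}, m ≤ n → u m <+: u n) (hx : ∀ k, (u (k + 1))[k]? = some (x k)) (n : ℕ) :
    List.ofFn (fun i : Fin n => x i) = (u n).take n := by
  refine List.ext_getElem? fun k => ?_
  rw [List.getElem?_ofFn, List.getElem?_take]
  split_ifs with hk
  · obtain ⟨r, hr⟩ := hu hk
    rw [← hr, List.getElem?_append_left (List.getElem?_eq_some_iff.1 (hx k)).1, hx]
  · rfl

section Branches

variable {κ : Type u}

/-- `P t` names two immediate successors of `t`, and `g n` says which one to take at step `n`. -/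
def pathNode (st : List κ) (P : List κ → Bool → κ) (g : ℕ → Bool) : ℕ → List κ
  | 0 => st
  | n + 1 => pathNode st P g n ++ [P (pathNode st P g n) (g n)]

variable {st : List κ} {P : List κ → Bool → κ}

@[simp]
theorem length_pathNode (g : ℕ → Bool) (n : ℕ) :
    (pathNode st P g n).length = st.length + n := by
  induction n with
  | zero => rfl
  | succ n ih => simp [pathNode, ih, Nat.add_assoc]

theorem pathNode_prefix_of_le (g : ℕ → Bool) {m n : ℕ} (h : m ≤ n) :
    pathNode st P g m <+: pathNode st P g n := by
  induction h with
  | refl => exact List.prefix_rfl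
  | step _ ih => exact ih.trans (List.prefix_append _ _)

def pathBranch (st : List κ) (P : List κ → Bool → κ) (g : ℕ → Bool) (k : ℕ) : κ :=
  (pathNode st P g (k + 1))[k]'(by rw [length_pathNode]; omega)

theorem ofFn_pathBranch (g : ℕ → Bool) (n : ℕ) :
    List.ofFn (fun i : Fin n => pathBranch st P g i) = (pathNode st P g n).take n :=
  List.ofFn_eq_take_of_prefix_chain (pathNode_prefix_of_le g)
    (fun _ => List.getElem?_eq_getElem _) n

theorem pathNode_eq_ofFn_pathBranch (g : ℕ → Bool) (n : ℕ) :
    pathNode st P g n = List.ofFn (fun i : Fin (st.length + n) => pathBranch st P g i) := by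
  rw [ofFn_pathBranch, List.prefix_iff_eq_take.1 (pathNode_prefix_of_le g (Nat.le_add_left n _)),
    length_pathNode]

theorem pathBranch_injective (hP : ∀ t, Injective (P t)) : Injective (pathBranch st P) := by
  intro g g' h
  have hnode : ∀ n, pathNode st P g n = pathNode st P g' n := fun n => by
    rw [pathNode_eq_ofFn_pathBranch, pathNode_eq_ofFn_pathBranch, h]
  funext n
  have := hnode (n + 1)
  simp only [pathNode, hnode n, List.append_cancel_left_eq, List.cons.injEq, and_true] at this
  exact hP _ this

end Branches

theorem IsSeqTree.continuum_le_mk_seqBranches {κ : Type u} {T : Set (List κ)} (hT : IsSeqTree T)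
    {st : List κ} (hst : st ∈ T) (hsplit : ∀ t ∈ T, st <+: t → {α | t ++ [α] ∈ T}.Nontrivial) :
    𝔠 ≤ #(seqBranches T) := by
  have hpair : ∀ s : Set κ, s.Nontrivial → ∃ p : Bool → κ, Injective p ∧ ∀ b, p b ∈ s :=
    fun s ⟨a, ha, b, hb, hab⟩ => ⟨fun c => cond c b a, Bool.injective_iff.2 hab, by
      rintro (_ | _) <;> assumption⟩
  have hchoice : ∀ t, ∃ p : Bool → κ,
      Injective p ∧ (t ∈ T → st <+: t → ∀ b, t ++ [p b] ∈ T) := by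
    intro t
    by_cases ht : t ∈ T ∧ st <+: t
    · obtain ⟨p, hp, hmem⟩ := hpair _ (hsplit t ht.1 ht.2)
      exact ⟨p, hp, fun _ _ => hmem⟩
    · obtain ⟨p, hp, -⟩ := hpair _ (hsplit st hst List.prefix_rfl)
      exact ⟨p, hp, fun h h' => (ht ⟨h, h'⟩).elim⟩
  choose P hPinj hPmem using hchoice
  have hnode : ∀ g n, pathNode st P g n ∈ T ∧ st <+: pathNode st P g n := by
    intro g n
    induction n with
    | zero => exact ⟨hst, List.prefix_rfl⟩
    | succ n ih => exact ⟨hPmem _ ih.1 ih.2 _, ih.2.trans (List.prefix_append _ _)⟩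
  have hbranch : ∀ g, pathBranch st P g ∈ seqBranches T := fun g n => by
    rw [ofFn_pathBranch]
    exact hT _ (hnode g n).1 _ (List.take_prefix _ _)
  calc 𝔠 = lift.{u} #(ℕ → Bool) := by simp
    _ ≤ lift.{0} #(seqBranches T) :=
      lift_mk_le_lift_mk_of_injective (f := fun g => ⟨_, hbranch g⟩) fun _ _ h =>
        pathBranch_injective hPinj (congrArg Subtype.val h)
    _ = #(seqBranches T) := lift_uzero _

theorem LaverOmega.continuum_le_mk_seqBranches {κ : Type u} {T : Set (List κ)}
    (hT : LaverOmega T) : 𝔠 ≤ #(seqBranches T) := by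
  obtain ⟨htree, -, st, hst, -, hsucc⟩ := hT
  exact htree.continuum_le_mk_seqBranches hst fun t ht hpre => (hsucc t ht hpre).2.nontrivial

theorem stmt2_general {κ : Type*} (hκ : Cardinal.mk κ = Cardinal.aleph 1) :
    ∃ X : Set (ℕ → κ), ∀ T : Set (List κ), LaverOmega T →
      (seqBranches T ∩ X).Nonempty ∧ (seqBranches T \ X).Nonempty := by
  have : Infinite κ := infinite_iff.2 (hκ ▸ aleph0_le_aleph 1)
  have hcount : #{T : Set (List κ) // LaverOmega T} ≤ 𝔠 := mk_laverOmega_le.trans_eq <| by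
    rw [hκ, power_aleph0_of_le_continuum (ofNat_le_aleph0.trans (aleph0_le_aleph 1))
      aleph_one_le_continuum]
  obtain ⟨X, hX⟩ := exists_inter_nonempty_diff_nonempty
    (fun T : {T : Set (List κ) // LaverOmega T} => seqBranches T.1)
    (fun T => hcount.trans T.2.continuum_le_mk_seqBranches)
    (fun T => aleph0_le_continuum.trans T.2.continuum_le_mk_seqBranches)
  exact ⟨X, fun T hT => hX ⟨T, hT⟩⟩

/-- If `ω₁ ≤ 2^ω` then there is a Bernstein-type set `X ⊆ ω₁^ω` meeting the
branch set of every `𝕃(ω₁,ω)`-tree as well as its complement. -/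
theorem stmt2 {κ : Type*} (hκ : Cardinal.mk κ = Cardinal.aleph 1)
    (hle : Cardinal.aleph 1 ≤ 2 ^ Cardinal.aleph0) :
    ∃ X : Set (ℕ → κ), ∀ T : Set (List κ), LaverOmega T →
      (seqBranches T ∩ X).Nonempty ∧ (seqBranches T \ X).Nonempty :=
  stmt2_general hκ
end

section
/- Let κ be regular uncountable, and let D ⊆ 2^{<κ} be open dense in κ-Cohen forcing (ordered by reverse extension). Then for every set H ⊆ 2^{<κ} of size < κ there exists τ ∈ 2^{<κ} such that for every s ∈ H, the concatenation s⌢τ belongs to D. -/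
/-!
For a fixed `s`, the set of `τ` with `s⌢τ ∈ D` is again open dense: to extend `τ`, extend `s⌢τ`
into `D` and cut `s` off again. So it suffices that fewer than `κ` open dense sets have a common
extension. Enumerate them along a well-order and build a descending chain of conditions meeting them
one at a time: at each stage fewer than `cof κ = κ` conditions have been chosen, so their lengths
are bounded below `κ` and their union is again a condition.
-/

noncomputable section

/-- A node of `2^{<κ}`: a length `< o` with a function normalized beyond the length. -/
def BNode (o : Ordinal) :=
  {p : Ordinal × (Ordinal → Bool) // p.1 < o ∧ ∀ i, p.1 ≤ i → p.2 i = false}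

namespace BNode

variable {o : Ordinal}

def len (a : BNode o) : Ordinal := a.1.1
def val (a : BNode o) : Ordinal → Bool := a.1.2
def Pre (a b : BNode o) : Prop := a.len ≤ b.len ∧ ∀ i < a.len, a.val i = b.val i

end BNode

open BNode

/-- `D` is open dense in κ-Cohen forcing `(2^{<κ}, ⊇)`. -/
def CohenOpenDense {o : Ordinal} (D : Set (BNode o)) : Prop :=
  (∀ s : BNode o, ∃ t ∈ D, Pre s t) ∧ ∀ s ∈ D, ∀ t, Pre s t → t ∈ D

/-- `u = s⌢τ`: `u` is the concatenation of `s` and `τ`. -/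
def IsConcat {o : Ordinal} (u s τ : BNode o) : Prop :=
  u.len = s.len + τ.len ∧ (∀ i < s.len, u.val i = s.val i) ∧
    ∀ i < τ.len, u.val (s.len + i) = τ.val i

open Cardinal Ordinal

universe u v

namespace BNode

variable {o : Ordinal.{v}}

theorem Pre.trans {a b c : BNode o} (hab : Pre a b) (hbc : Pre b c) : Pre a c :=
  ⟨hab.1.trans hbc.1, fun i hi => (hab.2 i hi).trans (hbc.2 i (hi.trans_le hab.1))⟩

def ofFun (l : Ordinal) (hl : l < o) (v : Ordinal → Bool) : BNode o :=
  ⟨(l, fun i => if i < l then v i else false), hl, fun _ hi => if_neg (not_lt.2 hi)⟩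

theorem val_ofFun {l : Ordinal} (hl : l < o) (v : Ordinal → Bool) {i : Ordinal} (hi : i < l) :
    (ofFun l hl v).val i = v i := if_pos hi

def tail (u : BNode o) (l : Ordinal) : BNode o :=
  ofFun (u.len - l) ((sub_le_self _ _).trans_lt u.2.1) fun i => u.val (l + i)

theorem tail_val {u : BNode o} {l i : Ordinal} (hi : i < u.len - l) :
    (u.tail l).val i = u.val (l + i) := val_ofFun _ _ hi

section Chain

variable {ι : Type u} [LinearOrder ι] (f : ι → BNode o)

theorem exists_pre_of_chain (hf : ∀ a b, a < b → Pre (f a) (f b)) {l : Ordinal} (hl : l < o)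
    (hlen : ∀ a, (f a).len ≤ l) : ∃ u, ∀ a, Pre (f a) u := by
  classical
  refine ⟨ofFun l hl fun α => if h : ∃ a, α < (f a).len then (f h.choose).val α else false,
    fun a => ⟨hlen a, fun α hα => ?_⟩⟩
  have h : ∃ a, α < (f a).len := ⟨a, hα⟩
  rw [val_ofFun hl _ (hα.trans_le (hlen a)), dif_pos h]
  rcases lt_trichotomy a h.choose with hlt | heq | hgt
  · exact (hf _ _ hlt).2 α hα
  · rw [← heq]
  · exact ((hf _ _ hgt).2 α h.choose_spec).symm

theorem exists_pre_of_chain_of_card_lt_cof (hf : ∀ a b, a < b → Pre (f a) (f b))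
    (hι : lift.{v} #ι < lift.{u} o.cof) : ∃ u, ∀ a, Pre (f a) u :=
  exists_pre_of_chain f hf (lift_iSup_lt_of_lt_cof (by rwa [lift_cof] at hι) fun a => (f a).2.1)
    fun a => le_ciSup ⟨o, by rintro _ ⟨b, rfl⟩; exact (f b).2.1.le⟩ a

end Chain

end BNode

section Concat

variable {o : Ordinal.{v}} {s τ τ' u u' w : BNode o}

theorem exists_isConcat (ho : IsPrincipal (· + ·) o) (s τ : BNode o) : ∃ u, IsConcat u s τ := by
  refine ⟨ofFun (s.len + τ.len) (ho s.2.1 τ.2.1)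
    fun i => if i < s.len then s.val i else τ.val (i - s.len), rfl, fun i hi => ?_, fun i hi => ?_⟩
  · rw [val_ofFun _ _ (hi.trans_le le_self_add), if_pos hi]
  · rw [val_ofFun _ _ (by simpa using hi), if_neg (not_lt.2 le_self_add), Ordinal.add_sub_cancel]

theorem IsConcat.pre_left (h : IsConcat u s τ) : Pre s u :=
  ⟨h.1 ▸ le_self_add, fun i hi => (h.2.1 i hi).symm⟩

theorem IsConcat.pre_of_pre (h : IsConcat u s τ) (h' : IsConcat u' s τ') (hτ : Pre τ τ') :
    Pre u u' := by
  refine ⟨by rw [h.1, h'.1]; exact (add_le_add_iff_left _).2 hτ.1, fun α hα => ?_⟩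
  rcases lt_or_ge α s.len with hs | hs
  · rw [h.2.1 α hs, h'.2.1 α hs]
  · obtain ⟨i, rfl⟩ : ∃ i, α = s.len + i := ⟨α - s.len, (Ordinal.add_sub_cancel_of_le hs).symm⟩
    have hi : i < τ.len := by simpa [h.1] using hα
    rw [h.2.2 i hi, h'.2.2 i (hi.trans_le hτ.1), hτ.2 i hi]

theorem isConcat_tail (h : Pre s u) : IsConcat u s (u.tail s.len) :=
  ⟨(Ordinal.add_sub_cancel_of_le h.1).symm, fun i hi => (h.2 i hi).symm,
    fun _ hi => (tail_val hi).symm⟩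

theorem IsConcat.pre_tail (h : IsConcat w s τ) (hwu : Pre w u) : Pre τ (u.tail s.len) := by
  have hlen : τ.len ≤ u.len - s.len := le_sub_of_add_le (h.1 ▸ hwu.1)
  refine ⟨hlen, fun i hi => ?_⟩
  have hw : s.len + i < w.len := by simpa [h.1] using hi
  rw [tail_val (hi.trans_le hlen), ← hwu.2 _ hw, h.2.2 i hi]

theorem CohenOpenDense.concat {D : Set (BNode o)} (hD : CohenOpenDense D)
    (ho : IsPrincipal (· + ·) o) (s : BNode o) : CohenOpenDense {τ | ∃ u ∈ D, IsConcat u s τ} := by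
  refine ⟨fun τ => ?_, ?_⟩
  · obtain ⟨w, hw⟩ := exists_isConcat ho s τ
    obtain ⟨u, huD, hwu⟩ := hD.1 w
    exact ⟨u.tail s.len, ⟨u, huD, isConcat_tail (hw.pre_left.trans hwu)⟩, hw.pre_tail hwu⟩
  · rintro τ ⟨u, huD, hu⟩ τ' hτ
    obtain ⟨u', hu'⟩ := exists_isConcat ho s τ'
    exact ⟨u', hD.2 u huD u' (hu.pre_of_pre hu' hτ), hu'⟩

end Concat

section Generic

variable {o : Ordinal.{v}} {ι : Type u} [LinearOrder ι] [WellFoundedLT ι] [Nonempty (BNode o)]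
  {A : ι → Set (BNode o)}

def genericChain (A : ι → Set (BNode o)) : ι → BNode o :=
  wellFounded_lt.fix fun i g =>
    Classical.epsilon fun t => t ∈ A i ∧ ∀ j (hj : j < i), Pre (g j hj) t

theorem genericChain_eq (i : ι) : genericChain A i =
    Classical.epsilon fun t => t ∈ A i ∧ ∀ j < i, Pre (genericChain A j) t :=
  wellFounded_lt.fix_eq _ i

theorem genericChain_spec (hA : ∀ i, CohenOpenDense (A i)) (hι : lift.{v} #ι < lift.{u} o.cof)
    (i : ι) : genericChain A i ∈ A i ∧ ∀ j < i, Pre (genericChain A j) (genericChain A i) := by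
  induction i using WellFoundedLT.induction with
  | _ i IH =>
    have hIio : lift.{v} #(Set.Iio i) < lift.{u} o.cof :=
      (lift_le.2 (mk_set_le _)).trans_lt hι
    obtain ⟨u, hu⟩ := exists_pre_of_chain_of_card_lt_cof (fun j : Set.Iio i => genericChain A j)
      (fun j k hjk => (IH k k.2).2 j hjk) hIio
    obtain ⟨t, ht, hut⟩ := (hA i).1 u
    rw [genericChain_eq]
    exact Classical.epsilon_spec
      (p := fun t => t ∈ A i ∧ ∀ j < i, Pre (genericChain A j) t)
      ⟨t, ht, fun j hj => (hu ⟨j, hj⟩).trans hut⟩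

end Generic

theorem exists_mem_of_card_lt_cof {o : Ordinal.{v}} {ι : Type u} {A : ι → Set (BNode o)}
    (hA : ∀ i, CohenOpenDense (A i)) (hι : lift.{v} #ι < lift.{u} o.cof) :
    ∃ τ, ∀ i, τ ∈ A i := by
  obtain ⟨_, _⟩ := exists_wellFoundedLT ι
  have ho : 0 < o := by
    rw [pos_iff_ne_zero]
    rintro rfl
    simp at hι
  have : Nonempty (BNode o) := ⟨ofFun 0 ho fun _ => false⟩
  obtain ⟨τ, hτ⟩ := exists_pre_of_chain_of_card_lt_cof (genericChain A)
    (fun j k hjk => (genericChain_spec hA hι k).2 j hjk) hι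
  exact ⟨τ, fun i => (hA i).2 _ (genericChain_spec hA hι i).1 _ (hτ i)⟩

theorem stmt12_general (κ : Cardinal.{0}) (hreg : κ.IsRegular)
    (D : Set (BNode κ.ord)) (hD : CohenOpenDense D)
    (H : Set (BNode κ.ord)) (hH : Cardinal.mk H < Cardinal.lift.{1} κ) :
    ∃ τ : BNode κ.ord, ∀ s ∈ H, ∃ u ∈ D, IsConcat u s τ := by
  obtain ⟨τ, hτ⟩ := exists_mem_of_card_lt_cof
    (fun s : H => hD.concat (isPrincipal_add_ord hreg.aleph0_le) s)
    (by simpa [hreg.cof_ord] using hH)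
  exact ⟨τ, fun s hs => hτ ⟨s, hs⟩⟩

/-- For `κ` regular uncountable and `D ⊆ 2^{<κ}` open dense in κ-Cohen
forcing, for every `H ⊆ 2^{<κ}` of size `< κ` there is a `τ ∈ 2^{<κ}` such that
`s⌢τ ∈ D` for every `s ∈ H`. -/
theorem stmt12 (κ : Cardinal.{0}) (hreg : κ.IsRegular) (hunc : Cardinal.aleph0 < κ)
    (D : Set (BNode κ.ord)) (hD : CohenOpenDense D)
    (H : Set (BNode κ.ord)) (hH : Cardinal.mk H < Cardinal.lift.{1} κ) :
    ∃ τ : BNode κ.ord, ∀ s ∈ H, ∃ u ∈ D, IsConcat u s τ :=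
  stmt12_general κ hreg D hD H hH
end
end

section
/- Let κ be regular uncountable and S ⊆ κ stationary and co-stationary. For the club κ-Mathias forcing ℝ_κ^Club (pairs (s,A) with s ∈ [κ]^{<κ}, A ⊆ κ club, sup s < min A), and for any condition (s,A) and any target t ∈ 2^{<κ}, there exists (s′,A′) ≤ (s,A) such that the sequence c defined by c(i) = 0 iff the (i+1)-st element of the generic set lies in S, restricted to the indices decided by (s′,A′) beyond those decided by (s,A), equals t. -/
/-!
Build by transfinite recursion an increasing sequence `α` in the club `A` of length `t.len`
with `α j ∈ S` iff `t j = 0`: at each stage the earlier choices are bounded below `κ` by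
regularity, and both `S` and its complement meet the club `A` above that bound. Appending `α`
to `s` and cutting `A` above a bound for `α` gives the required extension.
-/

noncomputable section

/-- A pattern `t ∈ 2^{<κ}`. -/
def PNode (o : Ordinal) :=
  {p : Ordinal × (Ordinal → Bool) // p.1 < o ∧ ∀ i, p.1 ≤ i → p.2 i = false}

def PNode.len {o : Ordinal} (a : PNode o) : Ordinal := a.1.1
def PNode.val {o : Ordinal} (a : PNode o) : Ordinal → Bool := a.1.2

/-- `C` is a closed unbounded subset of (the ordinals below) `o`. -/
def IsClubIn (C : Set Ordinal) (o : Ordinal) : Prop :=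
  C ⊆ Set.Iio o ∧ (∀ a < o, ∃ b ∈ C, a < b) ∧
    ∀ a < o, (C ∩ Set.Iio a).Nonempty → sSup (C ∩ Set.Iio a) = a → a ∈ C

/-- `S` is stationary in `o`. -/
def IsStationaryIn (S : Set Ordinal) (o : Ordinal) : Prop :=
  S ⊆ Set.Iio o ∧ ∀ C, IsClubIn C o → (S ∩ C).Nonempty

/-- A condition `(s,A)` of club κ-Mathias forcing: `s ∈ [κ]^{<κ}`, `A ⊆ κ` club and
`sup s < min A`. -/
def IsMCond (κ : Cardinal.{0}) (s A : Set Ordinal) : Prop :=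
  s ⊆ Set.Iio κ.ord ∧ Cardinal.mk s < Cardinal.lift.{1} κ ∧ IsClubIn A κ.ord ∧
    ∀ a ∈ s, ∀ b ∈ A, a < b

/-- The club κ-Mathias order: `(t,B) ≤ (s,A)` iff `t` end-extends `s`, `B ⊆ A` and
`t \ s ⊆ A`. -/
def MathiasLE (t B s A : Set Ordinal) : Prop :=
  s ⊆ t ∧ (∀ a ∈ t, a ∉ s → ∀ b ∈ s, b < a) ∧ B ⊆ A ∧ (t \ s) ⊆ A

/-- `e` enumerates the set `s` increasingly, with order type `δ`. -/
def Enumerates (e : Ordinal → Ordinal) (δ : Ordinal) (s : Set Ordinal) : Prop :=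
  (∀ i < δ, e i ∈ s) ∧ (∀ a ∈ s, ∃ i < δ, e i = a) ∧
    ∀ i j : Ordinal, i < j → j < δ → e i < e j

open Cardinal Set

lemma IsClubIn.inter_Ioi {A : Set Ordinal} {o β : Ordinal} (hA : IsClubIn A o) (hβ : β < o) :
    IsClubIn (A ∩ Ioi β) o := by
  obtain ⟨hAo, hunb, hclosed⟩ := hA
  refine ⟨fun x hx => hAo hx.1, fun a ha => ?_, fun a ha hne hsup => ?_⟩
  · obtain ⟨b, hb, hab⟩ := hunb (max a β) (max_lt ha hβ)
    exact ⟨b, ⟨hb, (le_max_right a β).trans_lt hab⟩, (le_max_left a β).trans_lt hab⟩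
  · obtain ⟨x, hx⟩ := hne
    have hsub : A ∩ Ioi β ∩ Iio a ⊆ A ∩ Iio a := fun y hy => ⟨hy.1.1, hy.2⟩
    have hsupA : sSup (A ∩ Iio a) = a := by
      refine le_antisymm (csSup_le ⟨x, hsub hx⟩ fun y hy => hy.2.le) ?_
      calc a = sSup (A ∩ Ioi β ∩ Iio a) := hsup.symm
        _ ≤ sSup (A ∩ Iio a) := csSup_le_csSup ⟨a, fun y hy => hy.2.le⟩ ⟨x, hx⟩ hsub
    exact ⟨hclosed a ha ⟨x, hsub hx⟩ hsupA, mem_Ioi.2 (hx.1.2.trans hx.2)⟩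

lemma exists_mem_club_gt_iff_mem {S A : Set Ordinal} {o β : Ordinal}
    (hS : IsStationaryIn S o) (hSco : IsStationaryIn (Iio o \ S) o)
    (hA : IsClubIn A o) (hβ : β < o) (b : Bool) :
    ∃ x ∈ A, β < x ∧ (b = false ↔ x ∈ S) := by
  cases b with
  | false =>
    obtain ⟨x, hxS, hxA, hβx⟩ := hS.2 _ (hA.inter_Ioi hβ)
    exact ⟨x, hxA, hβx, iff_of_true rfl hxS⟩
  | true =>
    obtain ⟨x, hxS, hxA, hβx⟩ := hSco.2 _ (hA.inter_Ioi hβ)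
    exact ⟨x, hxA, hβx, iff_of_false nofun hxS.2⟩

lemma exists_bound_of_isRegular {κ : Cardinal.{u}} (hκ : κ.IsRegular) {δ : Ordinal.{u}}
    (hδ : δ < κ.ord) {f : Ordinal.{u} → Ordinal.{u}} (hf : ∀ i < δ, f i < κ.ord) :
    ∃ β < κ.ord, ∀ i < δ, f i ≤ β := by
  refine ⟨sSup (f '' Iio δ), Ordinal.sSup_lt_of_lt_cof ?_ ?_,
    fun i hi => le_csSup (Ordinal.bddAbove_of_small) ⟨i, hi, rfl⟩⟩
  · rw [← Ordinal.lift_cof, hκ.cof_ord]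
    calc #(f '' Iio δ) ≤ #(Iio δ) := mk_image_le
      _ = lift δ.card := mk_Iio_ordinal δ
      _ < lift κ := lift_lt.2 (lt_ord.1 hδ)
  · rintro _ ⟨i, hi, rfl⟩
    exact hf i hi

def increasingChoice (P : Ordinal → Ordinal → Prop) : Ordinal → Ordinal :=
  Ordinal.lt_wf.fix fun j rec =>
    Classical.epsilon fun x => P j x ∧ ∀ i (hi : i < j), rec i hi < x

lemma increasingChoice_eq (P : Ordinal → Ordinal → Prop) (j : Ordinal) :
    increasingChoice P j =
      Classical.epsilon fun x => P j x ∧ ∀ i < j, increasingChoice P i < x :=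
  Ordinal.lt_wf.fix_eq _ j

lemma increasingChoice_spec {κ : Cardinal} (hκ : κ.IsRegular) {P : Ordinal → Ordinal → Prop}
    (hP : ∀ j < κ.ord, ∀ β < κ.ord, ∃ x, β < x ∧ P j x)
    (hPlt : ∀ j < κ.ord, ∀ x, P j x → x < κ.ord) :
    ∀ j < κ.ord, P j (increasingChoice P j) ∧
      ∀ i < j, increasingChoice P i < increasingChoice P j := by
  intro j
  induction j using WellFoundedLT.induction with
  | _ j IH =>
    intro hj
    obtain ⟨β, hβ, hleβ⟩ := exists_bound_of_isRegular hκ hj fun i hi =>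
      hPlt i (hi.trans hj) _ (IH i hi (hi.trans hj)).1
    obtain ⟨x, hβx, hPx⟩ := hP j hj β hβ
    rw [increasingChoice_eq]
    exact Classical.epsilon_spec (p := fun x => P j x ∧ ∀ i < j, increasingChoice P i < x)
      ⟨x, hPx, fun i hi => (hleβ i hi).trans_lt hβx⟩

def concatSeq (e₀ : Ordinal → Ordinal) (d₀ : Ordinal) (α : Ordinal → Ordinal) :
    Ordinal → Ordinal :=
  fun i => if i < d₀ then e₀ i else α (i - d₀)

lemma concatSeq_of_lt {e₀ α : Ordinal → Ordinal} {d₀ i : Ordinal} (hi : i < d₀) :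
    concatSeq e₀ d₀ α i = e₀ i :=
  if_pos hi

lemma concatSeq_add (e₀ α : Ordinal → Ordinal) (d₀ j : Ordinal) :
    concatSeq e₀ d₀ α (d₀ + j) = α j := by
  simp [concatSeq, Ordinal.add_sub_cancel]

lemma Ordinal.lt_or_exists_eq_add_of_lt_add {a b i : Ordinal} (hi : i < a + b) :
    i < a ∨ ∃ j < b, i = a + j := by
  refine (lt_or_ge i a).imp_right fun hai =>
    ⟨i - a, ?_, (Ordinal.add_sub_cancel_of_le hai).symm⟩
  rwa [← add_lt_add_iff_left a, Ordinal.add_sub_cancel_of_le hai]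

lemma Enumerates.concatSeq {e₀ α : Ordinal → Ordinal} {d₀ δ : Ordinal} {s : Set Ordinal}
    (he₀ : Enumerates e₀ d₀ s) (hα : ∀ i j, i < j → j < δ → α i < α j)
    (hsα : ∀ a ∈ s, ∀ j < δ, a < α j) :
    Enumerates (concatSeq e₀ d₀ α) (d₀ + δ) (s ∪ α '' Iio δ) := by
  obtain ⟨hmem, hsurj, hmono⟩ := he₀
  refine ⟨fun i hi => ?_, ?_, fun i k hik hk => ?_⟩
  · rcases Ordinal.lt_or_exists_eq_add_of_lt_add hi with hi | ⟨j, hj, rfl⟩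
    · exact .inl (concatSeq_of_lt hi ▸ hmem i hi)
    · exact .inr ⟨j, hj, (concatSeq_add e₀ α d₀ j).symm⟩
  · rintro a (ha | ⟨j, hj, rfl⟩)
    · obtain ⟨i, hi, rfl⟩ := hsurj a ha
      exact ⟨i, hi.trans_le le_self_add, concatSeq_of_lt hi⟩
    · exact ⟨d₀ + j, (add_lt_add_iff_left d₀).2 hj, concatSeq_add e₀ α d₀ j⟩
  · rcases Ordinal.lt_or_exists_eq_add_of_lt_add hk with hkd | ⟨k, hkδ, rfl⟩
    · rw [concatSeq_of_lt (hik.trans hkd), concatSeq_of_lt hkd]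
      exact hmono i k hik hkd
    rw [concatSeq_add]
    rcases Ordinal.lt_or_exists_eq_add_of_lt_add (hik.trans hk) with hi | ⟨i, -, rfl⟩
    · rw [concatSeq_of_lt hi]
      exact hsα _ (hmem i hi) k hkδ
    · rw [concatSeq_add]
      exact hα i k ((add_lt_add_iff_left d₀).1 hik) hkδ

lemma IsMCond.union_inter_Ioi {κ : Cardinal.{0}} (hκ : ℵ₀ ≤ κ) {s A T : Set Ordinal}
    {β : Ordinal} (hsA : IsMCond κ s A) (hTA : T ⊆ A) (hT : #T < lift κ) (hβ : β < κ.ord)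
    (hTβ : ∀ x ∈ T, x ≤ β) :
    IsMCond κ (s ∪ T) (A ∩ Ioi β) := by
  obtain ⟨hs, hscard, hA, hsltA⟩ := hsA
  refine ⟨union_subset hs (hTA.trans hA.1), ?_, hA.inter_Ioi hβ, ?_⟩
  · exact (mk_union_le s T).trans_lt (add_lt_of_lt (by simpa using hκ) hscard hT)
  · rintro a (ha | ha) b hb
    · exact hsltA a ha b hb.1
    · exact (hTβ a ha).trans_lt hb.2

lemma mathiasLE_union_inter {s A T B : Set Ordinal} (hsltA : ∀ a ∈ s, ∀ b ∈ A, a < b)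
    (hTA : T ⊆ A) : MathiasLE (s ∪ T) (A ∩ B) s A := by
  refine ⟨subset_union_left, ?_, inter_subset_left, ?_⟩
  · rintro a (ha | ha) has b hb
    · exact absurd ha has
    · exact hsltA b hb a (hTA ha)
  · rw [union_sdiff_left]
    exact sdiff_subset.trans hTA

theorem stmt17_general (κ : Cardinal.{0}) (hreg : κ.IsRegular)
    (S : Set Ordinal) (hS : IsStationaryIn S κ.ord)
    (hSco : IsStationaryIn (Set.Iio κ.ord \ S) κ.ord)
    (s A : Set Ordinal) (hsA : IsMCond κ s A)
    (e0 : Ordinal → Ordinal) (d0 : Ordinal) (he0 : Enumerates e0 d0 s)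
    (t : PNode κ.ord) :
    ∃ s' A' : Set Ordinal, IsMCond κ s' A' ∧ MathiasLE s' A' s A ∧
      ∃ e : Ordinal → Ordinal, Enumerates e (d0 + t.len) s' ∧
        (∀ i < d0, e i = e0 i) ∧
        ∀ j < t.len, (t.val j = false ↔ e (d0 + j) ∈ S) := by
  have hlen : t.len < κ.ord := t.2.1
  have hA := hsA.2.2.1
  set P : Ordinal → Ordinal → Prop := fun j x => x ∈ A ∧ (t.val j = false ↔ x ∈ S)
  set α := increasingChoice P
  have hα : ∀ j < κ.ord, P j (α j) ∧ ∀ i < j, α i < α j :=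
    increasingChoice_spec hreg
      (fun j _ β hβ => by
        obtain ⟨x, hxA, hβx, hx⟩ := exists_mem_club_gt_iff_mem hS hSco hA hβ (t.val j)
        exact ⟨x, hβx, hxA, hx⟩)
      fun _ _ _ hx => hA.1 hx.1
  have hαA : ∀ j < t.len, α j ∈ A := fun j hj => (hα j (hj.trans hlen)).1.1
  have hαS : ∀ j < t.len, (t.val j = false ↔ α j ∈ S) := fun j hj =>
    (hα j (hj.trans hlen)).1.2
  have hαmono : ∀ i j, i < j → j < t.len → α i < α j := fun i j hij hj =>
    (hα j (hj.trans hlen)).2 i hij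
  obtain ⟨β, hβ, hαβ⟩ := exists_bound_of_isRegular hreg hlen fun j hj => hA.1 (hαA j hj)
  have hTA : α '' Iio t.len ⊆ A := by
    rintro _ ⟨j, hj, rfl⟩
    exact hαA j hj
  have hT : #(α '' Iio t.len) < lift κ :=
    mk_image_le.trans_lt <| (mk_Iio_ordinal _).trans_lt <| lift_lt.2 (lt_ord.1 hlen)
  refine ⟨s ∪ α '' Iio t.len, A ∩ Ioi β, ?_, mathiasLE_union_inter hsA.2.2.2 hTA,
    concatSeq e0 d0 α, ?_, fun i hi => concatSeq_of_lt hi, fun j hj => ?_⟩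
  · refine hsA.union_inter_Ioi hreg.aleph0_le hTA hT hβ ?_
    rintro _ ⟨j, hj, rfl⟩
    exact hαβ j hj
  · exact he0.concatSeq hαmono fun a ha j hj => hsA.2.2.2 a ha _ (hαA j hj)
  · rw [concatSeq_add]
    exact hαS j hj

/-- Let `κ` be regular uncountable and `S ⊆ κ` stationary and
co-stationary. For every club κ-Mathias condition `(s,A)` and every target pattern
`t ∈ 2^{<κ}` there is a condition `(s',A') ≤ (s,A)` such that the generic-set
enumeration decided by `(s',A')` realizes, beyond the part decided by `(s,A)`, exactly
the pattern `t` for the Cohen sequence `c` (`c(i) = 0` iff the `(i+1)`-st element of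
the generic lies in `S`). -/
theorem stmt17 (κ : Cardinal.{0}) (hreg : κ.IsRegular) (hunc : Cardinal.aleph0 < κ)
    (S : Set Ordinal) (hS : IsStationaryIn S κ.ord)
    (hSco : IsStationaryIn (Set.Iio κ.ord \ S) κ.ord)
    (s A : Set Ordinal) (hsA : IsMCond κ s A)
    (e0 : Ordinal → Ordinal) (d0 : Ordinal) (he0 : Enumerates e0 d0 s)
    (t : PNode κ.ord) :
    ∃ s' A' : Set Ordinal, IsMCond κ s' A' ∧ MathiasLE s' A' s A ∧
      ∃ e : Ordinal → Ordinal, Enumerates e (d0 + t.len) s' ∧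
        (∀ i < d0, e i = e0 i) ∧
        ∀ j < t.len, (t.val j = false ↔ e (d0 + j) ∈ S) :=
  stmt17_general κ hreg S hS hSco s A hsA e0 d0 he0 t
end
end
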